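/- Let X_1,...,X_k and S be linearly independent vectors in R^{n+3} with Gram determinant Δ(X,S) < 0 for the Lie form B, and with B(S,S) < 0. Then every nonzero vector X in span(X_1,...,X_k,S) ∩ S^⊥ satisfies B(X,X) > 0, and span(X_1,...,X_k,S) = (span(X_1,...,X_k,S) ∩ S^⊥) ⊕ span(S). -/

import Mathlib

/-- The Lie form on ℝ^{n+3}: a symmetric bilinear form of signature (n+1, 2). -/
noncomputable def lieForm (n : ℕ) : LinearMap.BilinForm ℝ (Fin (n + 3) → ℝ) :=
  Matrix.toBilin' (Matrix.diagonal fun i => if (i : ℕ) < n + 1 then 1 else -1)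

/-!
Pull the Lie form back to the coefficient space `ℝ^{k+1}` of `(X, S)`; its matrix is the Gram
matrix `G`. Diagonalising `G` orthogonally, the negative index of the pulled-back form is the
number of negative eigenvalues of `G`. It is at most the negative index `2` of the Lie form, and
it is odd because `det G < 0`; so it is `1`, and no eigenvalue vanishes. Hence the form is
positive definite on a hyperplane. A nonzero vector orthogonal to `S` with nonpositive square
would span with `S` a nonpositive plane, which has to meet that hyperplane. The decomposition
of the span is the orthogonal splitting along the non-isotropic vector `S`.
-/

open Module QuadraticMap QuadraticForm Matrix

open Finset in
theorem Finset.odd_card_filter_neg_of_prod_neg {ι R : Type*} [CommRing R] [LinearOrder R]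
    [IsStrictOrderedRing R] {s : Finset ι} {f : ι → R} (h : ∏ i ∈ s, f i < 0) :
    Odd #{i ∈ s | f i < 0} := by
  by_contra heven
  rw [Nat.not_odd_iff_even] at heven
  refine h.not_ge ?_
  rw [← prod_filter_mul_prod_filter_not s (fun i => f i < 0)]
  refine mul_nonneg ?_ (prod_nonneg fun i hi => not_lt.mp (mem_filter.mp hi).2)
  have hnegneg : ∏ i ∈ s with f i < 0, f i = ∏ i ∈ s with f i < 0, -(-f i) := by simp
  rw [hnegneg, prod_neg, heven.neg_one_pow, one_mul]
  exact prod_nonneg fun i hi => (neg_pos.mpr (mem_filter.mp hi).2).le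

namespace QuadraticForm

variable {𝕜 M M' : Type*} [Field 𝕜] [LinearOrder 𝕜] [IsStrictOrderedRing 𝕜]
  [AddCommGroup M] [Module 𝕜 M] [AddCommGroup M'] [Module 𝕜 M']

theorem sigNeg_comp_le [FiniteDimensional 𝕜 M] [FiniteDimensional 𝕜 M'] (Q : QuadraticForm 𝕜 M)
    (f : M' →ₗ[𝕜] M) : sigNeg (Q.comp f) ≤ sigNeg Q := by
  obtain ⟨V, hV, hneg⟩ := exists_finrank_eq_sigNeg_and_negDef (Q.comp f)
  have hinj : Function.Injective (f.domRestrict V) := by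
    rw [← LinearMap.ker_eq_bot, LinearMap.ker_eq_bot']
    intro x hx
    by_contra hx0
    have hfx : f x = 0 := hx
    simpa [hfx] using hneg x hx0
  rw [← hV, ← LinearMap.finrank_range_of_inj hinj, LinearMap.range_domRestrict]
  refine le_sigNeg_of_negDef Q fun ⟨y, hy⟩ hy0 => ?_
  obtain ⟨x, hx, rfl⟩ := Submodule.mem_map.mp hy
  have hx0 : (⟨x, hx⟩ : V) ≠ 0 := by
    rintro ⟨⟩
    simp at hy0
  simpa using hneg ⟨x, hx⟩ hx0

theorem pos_of_polar_eq_zero [FiniteDimensional 𝕜 M] {Q : QuadraticForm 𝕜 M}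
    (hQ : finrank 𝕜 M ≤ sigPos Q + 1) {a e : M} (he : Q e < 0) (hae : polar Q a e = 0)
    (ha : a ≠ 0) : 0 < Q a := by
  by_contra! haa
  have hind : LinearIndependent 𝕜 ![a, e] := by
    refine LinearIndependent.pair_iff.mpr fun s t hst => ?_
    have ht : t = 0 := by
      have h := congrArg (fun x => polar Q x e) hst
      simp only [polar_add_left, polar_smul_left, hae, polar_self, smul_zero, zero_add] at h
      simpa [he.ne] using h
    subst ht
    simpa [ha] using hst
  have hnonpos : ∀ x ∈ Submodule.span 𝕜 {a, e}, Q x ≤ 0 := by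
    intro x hx
    obtain ⟨s, t, rfl⟩ := Submodule.mem_span_pair.mp hx
    rw [QuadraticMap.map_add (⇑Q), polar_smul_left, polar_smul_right, hae, QuadraticMap.map_smul,
      QuadraticMap.map_smul, smul_zero, smul_zero, add_zero, smul_eq_mul, smul_eq_mul]
    nlinarith [mul_self_nonneg s, mul_self_nonneg t]
  have hplane : finrank 𝕜 (Submodule.span 𝕜 {a, e}) = 2 := by
    have h := finrank_span_eq_card hind
    rwa [Matrix.range_cons_cons_empty, Fintype.card_fin] at h
  have := sigPos_add_finrank_le_of_nonpos hnonpos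
  omega

end QuadraticForm

theorem Matrix.IsHermitian.equivalent_weightedSumSquares {ι : Type*} [Fintype ι] [DecidableEq ι]
    {G : Matrix ι ι ℝ} (hG : G.IsHermitian) :
    G.toQuadraticForm'.Equivalent (weightedSumSquares ℝ hG.eigenvalues) := by
  let U := hG.eigenvectorUnitary
  refine ⟨(QuadraticMap.IsometryEquiv.mk (UnitaryGroup.toLinearEquiv U) fun y => ?_).symm⟩
  have hUU : star (U : Matrix ι ι ℝ) * U = 1 := Unitary.coe_star_mul_self U
  have hspec : G = U * diagonal hG.eigenvalues * star (U : Matrix ι ι ℝ) := by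
    simpa [Unitary.conjStarAlgAut_apply] using hG.spectral_theorem
  show G.toQuadraticForm' (U *ᵥ y) = _
  rw [Matrix.toQuadraticForm', LinearMap.BilinMap.toQuadraticMap_apply, toLinearMap₂'_apply']
  conv_lhs => rw [hspec]
  rw [mulVec_mulVec, mul_assoc _ (star _), hUU, mul_one, dotProduct_mulVec, vecMul_mulVec,
    ← mul_assoc, ← conjTranspose_eq_transpose_of_trivial, ← star_eq_conjTranspose, hUU, one_mul]
  simp only [dotProduct, vecMul_diagonal, weightedSumSquares_apply, smul_eq_mul]
  exact Finset.sum_congr rfl fun i _ => by ring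

open Finset in
theorem Matrix.IsHermitian.card_le_sigPos_add_one {ι : Type*} [Fintype ι] [DecidableEq ι]
    {G : Matrix ι ι ℝ} (hG : G.IsHermitian) (hdet : G.det < 0)
    (hneg : sigNeg G.toQuadraticForm' ≤ 2) : Fintype.card ι ≤ sigPos G.toQuadraticForm' + 1 := by
  have hequiv := hG.equivalent_weightedSumSquares
  rw [sigNeg_of_equiv_weightedSumSquares hequiv, Set.ncard_eq_toFinset_card',
    Set.toFinset_ofPred] at hneg
  rw [sigPos_of_equiv_weightedSumSquares hequiv, Set.ncard_eq_toFinset_card', Set.toFinset_ofPred]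
  rw [hG.det_eq_prod_eigenvalues] at hdet
  simp only [RCLike.ofReal_real_eq_id, id] at hdet
  obtain ⟨m, hodd⟩ := odd_card_filter_neg_of_prod_neg hdet
  have hpos : #{i | 0 < hG.eigenvalues i} = #{i | ¬ hG.eigenvalues i < 0} := by
    refine congrArg card (filter_congr fun i _ => ⟨fun h => h.not_gt, fun h => ?_⟩)
    exact (not_lt.mp h).lt_of_ne' fun h0 => hdet.ne (prod_eq_zero (mem_univ i) h0)
  have hcard := (univ : Finset ι).card_filter_add_card_filter_not (hG.eigenvalues · < 0)
  rw [card_univ] at hcard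
  omega

namespace LinearMap.BilinForm

variable {V ι : Type*} [AddCommGroup V] [Module ℝ V] [Fintype ι]

theorem toQuadraticMap_comp_linearCombination [DecidableEq ι] (B : LinearMap.BilinForm ℝ V)
    (Z : ι → V) :
    B.toQuadraticMap.comp (Fintype.linearCombination ℝ Z) =
      (Matrix.of fun i j => B (Z i) (Z j)).toQuadraticForm' := by
  ext c
  simp only [QuadraticMap.comp_apply, BilinMap.toQuadraticMap_apply,
    Fintype.linearCombination_apply, map_sum, map_smul, LinearMap.sum_apply, LinearMap.smul_apply,
    smul_eq_mul, Matrix.toQuadraticForm', toLinearMap₂'_apply', dotProduct, mulVec, of_apply,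
    Finset.mul_sum]
  rw [Finset.sum_comm]
  simp only [mul_comm, mul_left_comm]

theorem IsSymm.card_le_sigPos_add_one [DecidableEq ι] [FiniteDimensional ℝ V]
    {B : LinearMap.BilinForm ℝ V} (hB : B.IsSymm) (hB2 : sigNeg B.toQuadraticMap ≤ 2) {Z : ι → V}
    (hdet : (Matrix.of fun i j => B (Z i) (Z j)).det < 0) :
    Fintype.card ι ≤ sigPos (B.toQuadraticMap.comp (Fintype.linearCombination ℝ Z)) + 1 := by
  have hG : (Matrix.of fun i j => B (Z i) (Z j)).IsHermitian :=
    Matrix.IsHermitian.ext fun i j => hB.eq _ _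
  have hneg := sigNeg_comp_le B.toQuadraticMap (Fintype.linearCombination ℝ Z)
  rw [toQuadraticMap_comp_linearCombination] at hneg ⊢
  exact hG.card_le_sigPos_add_one hdet (hneg.trans hB2)

theorem IsSymm.pos_of_mem_span [FiniteDimensional ℝ V] {B : LinearMap.BilinForm ℝ V}
    (hB : B.IsSymm) {Z : ι → V}
    (hZ : Fintype.card ι ≤ sigPos (B.toQuadraticMap.comp (Fintype.linearCombination ℝ Z)) + 1)
    {x v : V} (hx : x ∈ Submodule.span ℝ (Set.range Z)) (hxx : B x x < 0)
    (hv : v ∈ Submodule.span ℝ (Set.range Z)) (hxv : B x v = 0) (hv0 : v ≠ 0) : 0 < B v v := by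
  set L := Fintype.linearCombination ℝ Z
  rw [← Fintype.range_linearCombination] at hx hv
  obtain ⟨e, rfl⟩ := hx
  obtain ⟨a, rfl⟩ := hv
  rw [← finrank_fintype_fun_eq_card ℝ] at hZ
  refine pos_of_polar_eq_zero hZ (e := e) hxx ?_ (by rintro rfl; simp at hv0)
  simp only [QuadraticMap.polar, QuadraticMap.comp_apply, map_add, BilinMap.toQuadraticMap_apply,
    LinearMap.add_apply]
  rw [hB.eq (L a) (L e), hxv]
  ring

theorem isCompl_span_singleton_ker {B : LinearMap.BilinForm ℝ V} {x : V} (hx : B x x ≠ 0) :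
    IsCompl (ℝ ∙ x) (LinearMap.ker (B x)) :=
  B.orthogonal_span_singleton_eq_toLin_ker x ▸ B.isCompl_span_singleton_orthogonal hx

end LinearMap.BilinForm

theorem lieForm_isSymm (n : ℕ) : (lieForm n).IsSymm :=
  Matrix.isSymm_toBilin'_iff_isSymm.mpr (isSymm_diagonal _)

theorem lieForm_toQuadraticMap (n : ℕ) :
    (lieForm n).toQuadraticMap =
      weightedSumSquares ℝ fun i : Fin (n + 3) => if (i : ℕ) < n + 1 then (1 : ℝ) else -1 := by
  ext x
  simp [lieForm, weightedSumSquares_apply, Matrix.toBilin'_apply', dotProduct, mulVec_diagonal,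
    mul_left_comm]

theorem sigNeg_lieForm (n : ℕ) : sigNeg (lieForm n).toQuadraticMap = 2 := by
  rw [lieForm_toQuadraticMap, sigNeg_of_equiv_weightedSumSquares (Equivalent.refl _),
    Set.ncard_eq_two]
  refine ⟨⟨n + 1, by omega⟩, ⟨n + 2, by omega⟩, by simp, ?_⟩
  ext i
  simp only [Set.mem_ofPred_eq, Set.mem_insert_iff, Set.mem_singleton_iff, Fin.ext_iff]
  split_ifs <;> norm_num <;> omega

theorem stmt_11_general {n k : ℕ} (X : Fin k → (Fin (n + 3) → ℝ)) (S : Fin (n + 3) → ℝ)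
    (Z : Fin (k + 1) → (Fin (n + 3) → ℝ)) (hZ : Z = Fin.snoc X S)
    (hdet : (Matrix.of fun i j => lieForm n (Z i) (Z j)).det < 0)
    (hSS : lieForm n S S < 0) :
    (∀ v ∈ Submodule.span ℝ (insert S (Set.range X)) ⊓ LinearMap.ker (lieForm n S),
      v ≠ 0 → 0 < lieForm n v v) ∧
    (Submodule.span ℝ (insert S (Set.range X)) ⊓ LinearMap.ker (lieForm n S)) ⊔
        Submodule.span ℝ {S} = Submodule.span ℝ (insert S (Set.range X)) ∧
    (Submodule.span ℝ (insert S (Set.range X)) ⊓ LinearMap.ker (lieForm n S)) ⊓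
        Submodule.span ℝ {S} = ⊥ := by
  have hW : Submodule.span ℝ (insert S (Set.range X)) = Submodule.span ℝ (Set.range Z) := by
    rw [hZ, Fin.range_snoc]
  have hSW : ℝ ∙ S ≤ Submodule.span ℝ (Set.range Z) := hW ▸ Submodule.span_mono (by simp)
  have hcompl := LinearMap.BilinForm.isCompl_span_singleton_ker hSS.ne
  have hsig := (lieForm_isSymm n).card_le_sigPos_add_one (sigNeg_lieForm n).le hdet
  rw [hW]
  refine ⟨fun v ⟨hvW, hvS⟩ hv => ?_, ?_, ?_⟩
  · exact (lieForm_isSymm n).pos_of_mem_span hsig (hSW (Submodule.mem_span_singleton_self S)) hSS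
      hvW hvS hv
  · rw [sup_comm, inf_comm, ← sup_inf_assoc_of_le _ hSW, hcompl.sup_eq_top, top_inf_eq]
  · exact (hcompl.disjoint.symm.mono_left inf_le_right).eq_bot

/-- Let `X_1,...,X_k, S` be linearly independent with Gram determinant
`Δ(X,S) < 0` for the Lie form, and `B(S,S) < 0`. Then every nonzero vector of
`span(X,S) ∩ S^⊥` has positive square, and `span(X,S) = (span(X,S) ∩ S^⊥) ⊕ ⟨S⟩`. -/
theorem stmt_11 {n k : ℕ} (X : Fin k → (Fin (n + 3) → ℝ)) (S : Fin (n + 3) → ℝ)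
    (Z : Fin (k + 1) → (Fin (n + 3) → ℝ)) (hZ : Z = Fin.snoc X S)
    (hind : LinearIndependent ℝ Z)
    (hdet : (Matrix.of fun i j => lieForm n (Z i) (Z j)).det < 0)
    (hSS : lieForm n S S < 0) :
    (∀ v ∈ Submodule.span ℝ (insert S (Set.range X)) ⊓ LinearMap.ker (lieForm n S),
      v ≠ 0 → 0 < lieForm n v v) ∧
    (Submodule.span ℝ (insert S (Set.range X)) ⊓ LinearMap.ker (lieForm n S)) ⊔
        Submodule.span ℝ {S} = Submodule.span ℝ (insert S (Set.range X)) ∧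
    (Submodule.span ℝ (insert S (Set.range X)) ⊓ LinearMap.ker (lieForm n S)) ⊓
        Submodule.span ℝ {S} = ⊥ :=
  stmt_11_general X S Z hZ hdet hSS
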